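/- For all n ∈ ℕ and all i with 1 ≤ i ≤ 2^n - 1, the similarity density SD(t_n, t_{n+1}[i .. 2^n + i - 1]) equals 1/2 if i = 2^{n-1}, and lies in [1/4, 3/4] otherwise. -/

import Mathlib

def mu (l : List ℕ) : List ℕ := l.flatMap (fun b => [b, 1 - b])
def tWord (n : ℕ) : List ℕ := mu^[n] [0]

/-- Similarity density of two finite words (of the same length). -/
noncomputable def SD (x y : List ℕ) : ℝ :=
  (List.zipWith (fun a b => if a = b then (1 : ℝ) else 0) x y).sum / x.length

/-!
Write `t_n[j] = s₂(j) mod 2` (binary digit sum) and `ε(j) = (-1) ^ t[j]` (`tmSign`).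
The window of `t_{n+1}` at offset `i` agrees with `t_n` in `(2^n + C_n(i)) / 2` places,
where `C_n(i) = ∑_{j < 2^n} ε(j) ε(i + j)` (`autocorr n i`). From `ε(2j) = ε(j)` and
`ε(2j + 1) = -ε(j)` we get `C_{n+1}(2i) = 2 C_n(i)` and
`C_{n+1}(2i + 1) = -(C_n(i) + C_n(i + 1))`. The first gives `C_n(2^{n-1}) = 2^{n-1} C_1(1) = 0`;
both together give `|C_n(i)| ≤ 2^{n-1}` for `0 < i < 2^n` by induction, the boundary values
`C_n(0) = 2^n` and `C_n(2^n) = -2^n` being offset by the signs `C_n(1) ≤ 0` and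
`C_n(2^n - 1) ≥ 0`, which the recursion reads off the trivial bound `|C_{n-1}| ≤ 2^{n-1}`.
-/

def thueMorse (n : ℕ) : ℕ := (Nat.digits 2 n).sum % 2

lemma thueMorse_eq_zero_or_eq_one (n : ℕ) : thueMorse n = 0 ∨ thueMorse n = 1 :=
  Nat.mod_two_eq_zero_or_one _

lemma thueMorse_two_mul (k : ℕ) : thueMorse (2 * k) = thueMorse k := by
  rcases Nat.eq_zero_or_pos k with rfl | hk
  · rfl
  · rw [thueMorse, Nat.digits_def' one_lt_two (by positivity)]
    simp [thueMorse]

lemma thueMorse_two_mul_add_one (k : ℕ) : thueMorse (2 * k + 1) = 1 - thueMorse k := by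
  rw [thueMorse, Nat.digits_def' one_lt_two (by omega), List.sum_cons, thueMorse,
    show (2 * k + 1) % 2 = 1 by omega, show (2 * k + 1) / 2 = k by omega]
  omega

lemma mu_map_thueMorse_range (m : ℕ) :
    mu ((List.range m).map thueMorse) = (List.range (2 * m)).map thueMorse := by
  induction m with
  | zero => rfl
  | succ m ih =>
    rw [List.range_succ, List.map_append, mu, List.flatMap_append, ← mu, ih,
      show 2 * (m + 1) = 2 * m + 1 + 1 by ring, List.range_succ, List.range_succ]
    simp [thueMorse_two_mul, thueMorse_two_mul_add_one]

lemma tWord_eq_map_thueMorse (n : ℕ) : tWord n = (List.range (2 ^ n)).map thueMorse := by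
  induction n with
  | zero => rfl
  | succ n ih =>
    rw [tWord, Function.iterate_succ_apply', ← tWord, ih, mu_map_thueMorse_range, pow_succ']

def tmSign (n : ℕ) : ℤ := (-1) ^ thueMorse n

lemma tmSign_two_mul (k : ℕ) : tmSign (2 * k) = tmSign k := by
  rw [tmSign, thueMorse_two_mul, tmSign]

lemma tmSign_two_mul_add_one (k : ℕ) : tmSign (2 * k + 1) = -tmSign k := by
  rcases thueMorse_eq_zero_or_eq_one k with h | h <;>
    simp [tmSign, thueMorse_two_mul_add_one, h]

lemma tmSign_mul_self (n : ℕ) : tmSign n * tmSign n = 1 := by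
  rw [tmSign, ← pow_add, ← two_mul, pow_mul, neg_one_sq, one_pow]

lemma abs_tmSign (n : ℕ) : |tmSign n| = 1 := by
  rw [tmSign, abs_pow, abs_neg, abs_one, one_pow]

lemma ite_thueMorse_eq (a b : ℕ) :
    (if thueMorse a = thueMorse b then (1 : ℝ) else 0) = (1 + tmSign a * tmSign b) / 2 := by
  rcases thueMorse_eq_zero_or_eq_one a with ha | ha <;>
    rcases thueMorse_eq_zero_or_eq_one b with hb | hb <;>
    norm_num [tmSign, ha, hb]

def autocorr (n i : ℕ) : ℤ := ∑ j ∈ Finset.range (2 ^ n), tmSign j * tmSign (i + j)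

lemma sum_range_two_mul {M : Type*} [AddCommMonoid M] (f : ℕ → M) (m : ℕ) :
    ∑ j ∈ Finset.range (2 * m), f j = ∑ k ∈ Finset.range m, (f (2 * k) + f (2 * k + 1)) := by
  induction m with
  | zero => simp
  | succ m ih =>
    rw [show 2 * (m + 1) = 2 * m + 1 + 1 by ring, Finset.sum_range_succ,
      Finset.sum_range_succ, ih, Finset.sum_range_succ, add_assoc]

lemma autocorr_two_mul (n i : ℕ) : autocorr (n + 1) (2 * i) = 2 * autocorr n i := by
  rw [autocorr, pow_succ', sum_range_two_mul, autocorr, Finset.mul_sum]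
  refine Finset.sum_congr rfl fun k _ => ?_
  rw [← mul_add, show 2 * i + (2 * k + 1) = 2 * (i + k) + 1 by ring, tmSign_two_mul,
    tmSign_two_mul, tmSign_two_mul_add_one, tmSign_two_mul_add_one]
  ring

lemma autocorr_two_mul_add_one (n i : ℕ) :
    autocorr (n + 1) (2 * i + 1) = -(autocorr n i + autocorr n (i + 1)) := by
  rw [autocorr, pow_succ', sum_range_two_mul, autocorr, autocorr, ← Finset.sum_add_distrib,
    ← Finset.sum_neg_distrib]
  refine Finset.sum_congr rfl fun k _ => ?_
  rw [show 2 * i + 1 + 2 * k = 2 * (i + k) + 1 by ring,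
    show 2 * i + 1 + (2 * k + 1) = 2 * (i + 1 + k) by ring,
    tmSign_two_mul, tmSign_two_mul, tmSign_two_mul_add_one, tmSign_two_mul_add_one]
  ring

lemma autocorr_two_pow_mul (k n i : ℕ) : autocorr (n + k) (2 ^ k * i) = 2 ^ k * autocorr n i := by
  induction k with
  | zero => simp
  | succ k ih =>
    rw [← add_assoc, pow_succ', mul_assoc, autocorr_two_mul, ih, pow_succ', mul_assoc]

lemma autocorr_zero (n : ℕ) : autocorr n 0 = 2 ^ n := by
  simp [autocorr, tmSign_mul_self]

lemma autocorr_two_pow (n : ℕ) : autocorr n (2 ^ n) = -2 ^ n := by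
  have h := autocorr_two_pow_mul n 0 1
  rw [zero_add, mul_one] at h
  rw [h, show autocorr 0 1 = -1 by norm_num [autocorr, tmSign, thueMorse], mul_neg_one]

lemma autocorr_two_pow_of_succ (n : ℕ) : autocorr (n + 1) (2 ^ n) = 0 := by
  have h := autocorr_two_pow_mul n 1 1
  rw [add_comm, mul_one] at h
  rw [h, show autocorr 1 1 = 0 by norm_num [autocorr, Finset.sum_range_succ, tmSign, thueMorse],
    mul_zero]

lemma abs_autocorr_le (n i : ℕ) : |autocorr n i| ≤ 2 ^ n := by
  calc |autocorr n i| ≤ ∑ j ∈ Finset.range (2 ^ n), |tmSign j * tmSign (i + j)| :=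
        Finset.abs_sum_le_sum_abs _ _
    _ = 2 ^ n := by simp [abs_mul, abs_tmSign]

lemma autocorr_one_nonpos (n : ℕ) : autocorr (n + 1) 1 ≤ 0 := by
  have h := autocorr_two_mul_add_one n 0
  rw [mul_zero, zero_add, autocorr_zero] at h
  linarith [abs_le.mp (abs_autocorr_le n 1)]

lemma autocorr_two_pow_sub_one_nonneg (n : ℕ) : 0 ≤ autocorr (n + 1) (2 ^ (n + 1) - 1) := by
  have h := autocorr_two_mul_add_one n (2 ^ n - 1)
  rw [show 2 * (2 ^ n - 1) + 1 = 2 ^ (n + 1) - 1 by have := n.one_le_two_pow; rw [pow_succ]; omega,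
    Nat.sub_add_cancel n.one_le_two_pow, autocorr_two_pow] at h
  linarith [abs_le.mp (abs_autocorr_le n (2 ^ n - 1))]

lemma abs_autocorr_le_of_pos_of_lt (n i : ℕ) (hi : 1 ≤ i) (hin : i < 2 ^ (n + 1)) :
    |autocorr (n + 1) i| ≤ 2 ^ n := by
  induction n generalizing i with
  | zero =>
    obtain rfl : i = 1 := by omega
    norm_num [autocorr, Finset.sum_range_succ, tmSign, thueMorse]
  | succ n ih =>
    obtain ⟨k, rfl | rfl⟩ := Nat.even_or_odd' i
    · rw [autocorr_two_mul, abs_mul, abs_two, pow_succ']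
      gcongr
      exact ih k (by omega) (by rw [pow_succ] at hin; omega)
    · rw [autocorr_two_mul_add_one, abs_neg]
      have hk : k < 2 ^ (n + 1) := by rw [pow_succ] at hin; omega
      have h_one := abs_le.mp (abs_autocorr_le (n + 1) 1)
      have h_pred := abs_le.mp (abs_autocorr_le (n + 1) (2 ^ (n + 1) - 1))
      have h_pow : (2 : ℤ) ^ (n + 1) = 2 * 2 ^ n := pow_succ' 2 n
      rw [abs_le]
      rcases Nat.eq_zero_or_pos k with rfl | hk_pos
      · rw [autocorr_zero, zero_add]
        constructor <;> linarith [autocorr_one_nonpos n]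
      rcases (Nat.add_one_le_of_lt hk).eq_or_lt with hk_top | hk_top
      · rw [hk_top, autocorr_two_pow, show k = 2 ^ (n + 1) - 1 by omega]
        constructor <;> linarith [autocorr_two_pow_sub_one_nonneg n]
      have h_k := abs_le.mp (ih k hk_pos hk)
      have h_succ := abs_le.mp (ih (k + 1) (by omega) hk_top)
      constructor <;> linarith

lemma SD_tWord_window (n i : ℕ) (hi : i ≤ 2 ^ n) :
    SD (tWord n) (((tWord (n + 1)).drop i).take (2 ^ n))
      = (2 ^ n + autocorr n i) / 2 ^ (n + 1) := by
  have h_zip : List.zipWith (fun a b => if a = b then (1 : ℝ) else 0) (tWord n)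
      (((tWord (n + 1)).drop i).take (2 ^ n)) = (List.range (2 ^ n)).map
        fun j => if thueMorse j = thueMorse (i + j) then (1 : ℝ) else 0 := by
    apply List.ext_getElem
    · simp only [tWord_eq_map_thueMorse, List.length_zipWith, List.length_take,
        List.length_drop, List.length_map, List.length_range]
      rw [pow_succ]
      omega
    · intro k _ _
      simp [tWord_eq_map_thueMorse]
  rw [SD, h_zip, tWord_eq_map_thueMorse]
  simp only [List.length_map, List.length_range, Nat.cast_pow, Nat.cast_ofNat]
  rw [← Multiset.sum_coe, ← Multiset.map_coe, ← Multiset.range, ← Finset.range_val,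
    ← Finset.sum_eq_multiset_sum]
  simp only [ite_thueMorse_eq, autocorr, ← Finset.sum_div, Finset.sum_add_distrib]
  push_cast
  rw [Finset.sum_const, Finset.card_range, nsmul_one, Nat.cast_pow, Nat.cast_ofNat, div_div,
    pow_succ']

theorem technical_one_a (n i : ℕ) (h1 : 1 ≤ i) (h2 : i ≤ 2 ^ n - 1) :
    (i = 2 ^ (n - 1) →
      SD (tWord n) (((tWord (n + 1)).drop i).take (2 ^ n)) = 1/2) ∧
    (i ≠ 2 ^ (n - 1) →
      SD (tWord n) (((tWord (n + 1)).drop i).take (2 ^ n)) ∈ Set.Icc (1/4 : ℝ) (3/4)) := by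
  obtain ⟨m, rfl⟩ : ∃ m, n = m + 1 :=
    Nat.exists_eq_add_one.mpr <| Nat.pos_of_ne_zero <| by rintro rfl; simp at h2; omega
  have hi : i < 2 ^ (m + 1) := by omega
  have h_pow : (2 : ℝ) ^ (m + 1 + 1) = 2 * 2 ^ (m + 1) := pow_succ' 2 _
  rw [SD_tWord_window (m + 1) i hi.le, h_pow]
  refine ⟨fun h_mid => ?_, fun _ => ?_⟩
  · rw [Nat.add_sub_cancel] at h_mid
    rw [h_mid, autocorr_two_pow_of_succ, Int.cast_zero, add_zero]
    field_simp
  · have h_bound := abs_le.mp (abs_autocorr_le_of_pos_of_lt m i h1 hi)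
    have h_bound_real :
        -(2 : ℝ) ^ m ≤ autocorr (m + 1) i ∧ (autocorr (m + 1) i : ℝ) ≤ 2 ^ m := by
      exact_mod_cast h_bound
    rw [Set.mem_Icc, le_div_iff₀ (by positivity), div_le_iff₀ (by positivity), pow_succ]
    constructor <;> linarith
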